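/- arXiv:1307.2584 — 4 statements merged into one kernel-verified Lean document; each statement's English description precedes it below -/
import Mathlib

section
/- If ρ = |h|² where h is a circularly symmetric complex Gaussian with variance r > 0 (so ρ is exponentially distributed with mean r), and a, b > 0 are reals, then E[ρ/(aρ + b)] = (1/a)·(1 − (b/(a r)) · E₁(b/(a r)) · e^{b/(a r)}), where E₁(x) = ∫₁^∞ e^{−t x}/t dt is the exponential integral. -/
/-!
Writing `ρ / (aρ + b) = (1 - (b/a) / (ρ + b/a)) / a` reduces the expectation to the integral
`∫₀^∞ e^{-ρ/r} / (ρ + s) dρ` with `s = b/a`, and the substitution `ρ = s (t - 1)` turns that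
integral into `e^{s/r} E₁(s/r)`.
-/

open MeasureTheory

/-- Exponential integral `E₁(x) = ∫₁^∞ e^{−tx}/t dt`. -/
noncomputable def expInt (x : ℝ) : ℝ := ∫ t in Set.Ioi (1 : ℝ), Real.exp (-(t * x)) / t

open Real Set

theorem setIntegral_comp_add_right_Ioi {E : Type*} [NormedAddCommGroup E] [NormedSpace ℝ E]
    (f : ℝ → E) (a c : ℝ) : ∫ x in Ioi a, f (x + c) = ∫ x in Ioi (a + c), f x := by
  simpa [preimage_add_const_Ioi] using
    (measurePreserving_add_right volume c).setIntegral_preimage_emb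
      (Homeomorph.addRight c).measurableEmbedding f (Ioi (a + c))

theorem expInt_mul_eq_setIntegral_Ioi {s : ℝ} (hs : 0 < s) (x : ℝ) :
    expInt (s * x) = ∫ u in Ioi s, exp (-(u * x)) / u := by
  have hscale := integral_comp_mul_left_Ioi' (fun u => exp (-(u * x)) / u) 1 hs
  rw [mul_one] at hscale
  rw [expInt, ← hscale, smul_eq_mul, ← integral_const_mul]
  refine setIntegral_congr_fun measurableSet_Ioi fun t ht => ?_
  have ht : t ≠ 0 := (zero_lt_one.trans ht).ne'
  field_simp

theorem integral_exp_neg_mul_div_add_Ioi {s : ℝ} (hs : 0 < s) (x : ℝ) :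
    ∫ ρ in Ioi 0, exp (-(ρ * x)) / (ρ + s) = exp (s * x) * expInt (s * x) := by
  rw [expInt_mul_eq_setIntegral_Ioi hs, ← zero_add s, ← setIntegral_comp_add_right_Ioi,
    ← integral_const_mul, zero_add]
  refine setIntegral_congr_fun measurableSet_Ioi fun ρ _ => ?_
  rw [mul_div_assoc', ← exp_add]
  ring_nf

theorem integral_exp_neg_div_Ioi {r : ℝ} (hr : 0 < r) : ∫ ρ in Ioi 0, exp (-ρ / r) = r := by
  have h := integral_exp_mul_Ioi (neg_lt_zero.mpr (inv_pos.mpr hr)) 0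
  rw [mul_zero, exp_zero, neg_div_neg_eq, one_div, inv_inv] at h
  refine (setIntegral_congr_fun measurableSet_Ioi fun ρ _ => ?_).trans h
  ring_nf

theorem integrableOn_exp_neg_div_Ioi {r : ℝ} (hr : 0 < r) :
    IntegrableOn (fun ρ => exp (-ρ / r)) (Ioi 0) := by
  convert exp_neg_integrableOn_Ioi 0 (inv_pos.mpr hr) using 2 with ρ
  ring_nf

theorem integrableOn_exp_neg_div_div_add_Ioi {r s : ℝ} (hr : 0 < r) (hs : 0 < s) :
    IntegrableOn (fun ρ => exp (-ρ / r) / (ρ + s)) (Ioi 0) := by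
  refine ((integrableOn_exp_neg_div_Ioi hr).div_const s).mono' ?_ ?_
  · exact (by fun_prop : Measurable fun ρ => exp (-ρ / r) / (ρ + s)).aestronglyMeasurable
  · refine (ae_restrict_iff' measurableSet_Ioi).mpr (ae_of_all _ fun ρ (hρ : 0 < ρ) => ?_)
    rw [Real.norm_of_nonneg (by positivity)]
    gcongr
    linarith

/-- If `ρ` is exponentially distributed with mean `r > 0` and `a, b > 0`, then
`E[ρ/(aρ+b)] = (1/a)(1 − (b/(ar)) E₁(b/(ar)) e^{b/(ar)})`. -/
theorem stmt1 (r a b : ℝ) (hr : 0 < r) (ha : 0 < a) (hb : 0 < b) :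
    ∫ ρ in Set.Ioi (0 : ℝ), (ρ / (a * ρ + b)) * ((1 / r) * Real.exp (-ρ / r))
      = (1 / a) * (1 - (b / (a * r)) * expInt (b / (a * r)) * Real.exp (b / (a * r))) := by
  have hs : 0 < b / a := div_pos hb ha
  have hdecomp : ∀ ρ ∈ Ioi (0 : ℝ), (ρ / (a * ρ + b)) * ((1 / r) * exp (-ρ / r))
      = 1 / (a * r) * exp (-ρ / r) - b / (a ^ 2 * r) * (exp (-ρ / r) / (ρ + b / a)) := by
    intro ρ (hρ : 0 < ρ)
    have : a * ρ + b ≠ 0 := by positivity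
    field_simp
    ring
  have hshift : ∫ ρ in Ioi 0, exp (-ρ / r) / (ρ + b / a)
      = exp (b / (a * r)) * expInt (b / (a * r)) := by
    simpa only [← div_eq_mul_inv, div_div, neg_div] using
      integral_exp_neg_mul_div_add_Ioi hs r⁻¹
  rw [setIntegral_congr_fun measurableSet_Ioi hdecomp,
    integral_sub ((integrableOn_exp_neg_div_Ioi hr).const_mul _)
      ((integrableOn_exp_neg_div_div_add_Ioi hr hs).const_mul _),
    integral_const_mul, integral_const_mul, integral_exp_neg_div_Ioi hr, hshift]
  field_simp
end

section
/- (Estimation error floor) With R = λI and S = 0, the per-element LMMSE estimation error variance converges as p → ∞ to the strictly positive floor λ·(1 − 1/(1 + κ_t + κ_r)), whenever κ_t + κ_r > 0. In particular, perfect estimation accuracy is impossible for any finite or infinite pilot power under hardware impairments. -/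
open Filter Topology

theorem tendsto_mul_div_mul_add_atTop {a c s : ℝ} (hc : c ≠ 0) :
    Tendsto (fun p : ℝ => p * a / (p * c + s)) atTop (𝓝 (a / c)) := by
  have hden : Tendsto (fun p : ℝ => c + s / p) atTop (𝓝 c) := by
    simpa using (tendsto_const_nhds (x := c)).add (tendsto_const_nhds.div_atTop tendsto_id)
  refine ((tendsto_const_nhds (x := a)).div hden hc).congr' ?_
  filter_upwards [eventually_gt_atTop 0] with p hp
  simp only [Pi.div_apply]
  rw [← mul_div_mul_left a _ hp.ne', mul_add, mul_div_cancel₀ s hp.ne', mul_comm p c]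

theorem stmt7_general (lam σ2 κt κr : ℝ) (hlam : 0 < lam)
    (hpos : 0 < κt + κr) :
    Filter.Tendsto (fun p : ℝ => lam * (1 - p * lam / (p * lam * (1 + κt + κr) + σ2)))
        Filter.atTop (nhds (lam * (1 - 1 / (1 + κt + κr))))
      ∧ 0 < lam * (1 - 1 / (1 + κt + κr)) := by
  have hK : 1 < 1 + κt + κr := by linarith
  have hratio : Tendsto (fun p : ℝ => p * lam / (p * lam * (1 + κt + κr) + σ2))
      atTop (𝓝 (1 / (1 + κt + κr))) := by
    have h := tendsto_mul_div_mul_add_atTop (a := lam) (s := σ2)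
      (mul_pos hlam (zero_lt_one.trans hK)).ne'
    simpa only [mul_assoc, div_mul_cancel_left₀ hlam.ne', one_div] using h
  refine ⟨(tendsto_const_nhds.sub hratio).const_mul lam, mul_pos hlam ?_⟩
  exact sub_pos.2 ((div_lt_one (zero_lt_one.trans hK)).2 hK)

/-- Estimation error floor: as the pilot power `p → ∞`, the per-element error variance
`c(p) = λ(1 − pλ/(pλ(1+κ_t+κ_r)+σ²))` converges to the strictly positive floor
`λ(1 − 1/(1+κ_t+κ_r))` whenever `κ_t + κ_r > 0`. -/
theorem stmt7 (lam σ2 κt κr : ℝ) (hlam : 0 < lam) (hσ : 0 < σ2)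
    (hκt : 0 ≤ κt) (hκr : 0 ≤ κr) (hpos : 0 < κt + κr) :
    Filter.Tendsto (fun p : ℝ => lam * (1 - p * lam / (p * lam * (1 + κt + κr) + σ2)))
        Filter.atTop (nhds (lam * (1 - 1 / (1 + κt + κr))))
      ∧ 0 < lam * (1 - 1 / (1 + κt + κr)) :=
  stmt7_general lam σ2 κt κr hlam hpos
end

section
/- (High-power capacity ceiling) The function q ↦ log₂(1 + G(q)/(1 + κ_r G(q))), where G(q) = ∑_{i=1}^N (1/κ_t)(1 − (σ²/(q κ_t rᵢᵢ)) e^{σ²/(q κ_t rᵢᵢ)} E₁(σ²/(q κ_t rᵢᵢ))), converges as q → ∞ to log₂(1 + N/(κ_t + κ_r N)), for κ_t, κ_r > 0 and rᵢᵢ > 0 for all i. -/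
open MeasureTheory

/-!
The only analytic input is `x eˣ E₁(x) → 0` as `x → 0⁺`. On `t ≥ 1` we have `1/t ≤ t^{-1/2}`, so
`E₁(x) ≤ ∫₀^∞ t^{-1/2} e^{-xt} dt = Γ(1/2)/√x`, whence `0 ≤ x eˣ E₁(x) ≤ Γ(1/2) √x eˣ → 0`.
Each summand of `G(q)` therefore tends to `1/κ_t`, so `G(q) → N/κ_t`, and the capacity converges
by continuity of `y ↦ log₂(1 + y/(1 + κ_r y))` at `N/κ_t`.
-/

open Set Real Filter Topology

lemma expInt_nonneg (x : ℝ) : 0 ≤ expInt x :=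
  setIntegral_nonneg measurableSet_Ioi fun t (ht : 1 < t) => by positivity

lemma exp_neg_mul_div_le_rpow_mul_exp {t : ℝ} (x : ℝ) (ht : 1 ≤ t) :
    exp (-(t * x)) / t ≤ t ^ (-(1 / 2) : ℝ) * exp (-(x * t)) := by
  have ht0 : 0 < t := by linarith
  have hsqrt : t ^ (1 / 2 : ℝ) ≤ t := by
    simpa using rpow_le_rpow_of_exponent_le ht (show (1 / 2 : ℝ) ≤ 1 by norm_num)
  have hinv : 1 / t ≤ t ^ (-(1 / 2) : ℝ) := by
    rw [rpow_neg ht0.le, one_div]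
    gcongr
  calc exp (-(t * x)) / t = 1 / t * exp (-(x * t)) := by rw [mul_comm t x]; ring
    _ ≤ t ^ (-(1 / 2) : ℝ) * exp (-(x * t)) := by gcongr

lemma expInt_le_Gamma_one_half_div_sqrt {x : ℝ} (hx : 0 < x) :
    expInt x ≤ Gamma (1 / 2) / √x := by
  have hmajorant : IntegrableOn (fun t : ℝ => t ^ (-(1 / 2) : ℝ) * exp (-(x * t))) (Ioi 0) := by
    simpa [rpow_one, neg_mul] using
      integrableOn_rpow_mul_exp_neg_mul_rpow (s := -(1 / 2)) (p := 1) (by norm_num) (by norm_num) hx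
  have hintegrand : IntegrableOn (fun t : ℝ => exp (-(t * x)) / t) (Ioi 1) := by
    refine Integrable.mono' (hmajorant.mono_set (Ioi_subset_Ioi zero_le_one))
      (by fun_prop : Measurable _).aestronglyMeasurable ?_
    filter_upwards [ae_restrict_mem measurableSet_Ioi] with t (ht : 1 < t)
    rw [norm_of_nonneg (by positivity)]
    exact exp_neg_mul_div_le_rpow_mul_exp x ht.le
  have hGamma : ∫ t in Ioi (0 : ℝ), t ^ (-(1 / 2) : ℝ) * exp (-(x * t)) = Gamma (1 / 2) / √x := by
    calc _ = ∫ t in Ioi (0 : ℝ), t ^ ((1 / 2 : ℝ) - 1) * exp (-(x * t)) := by norm_num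
      _ = (1 / x) ^ (1 / 2 : ℝ) * Gamma (1 / 2) := integral_rpow_mul_exp_neg_mul_Ioi (by norm_num) hx
      _ = Gamma (1 / 2) / √x := by rw [sqrt_eq_rpow, div_rpow zero_le_one hx.le, one_rpow]; ring
  calc expInt x ≤ ∫ t in Ioi (1 : ℝ), t ^ (-(1 / 2) : ℝ) * exp (-(x * t)) :=
        setIntegral_mono_on hintegrand (hmajorant.mono_set (Ioi_subset_Ioi zero_le_one))
          measurableSet_Ioi fun t ht => exp_neg_mul_div_le_rpow_mul_exp x (le_of_lt ht)
    _ ≤ ∫ t in Ioi (0 : ℝ), t ^ (-(1 / 2) : ℝ) * exp (-(x * t)) :=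
        setIntegral_mono_set hmajorant
          (ae_restrict_of_forall_mem measurableSet_Ioi fun t (ht : 0 < t) => by positivity)
          (Ioi_subset_Ioi zero_le_one).eventuallyLE
    _ = Gamma (1 / 2) / √x := hGamma

lemma tendsto_mul_exp_mul_expInt_nhdsGT_zero :
    Tendsto (fun x : ℝ => x * exp x * expInt x) (𝓝[>] 0) (𝓝 0) := by
  have hbound : Tendsto (fun x : ℝ => √x * exp x * Gamma (1 / 2)) (𝓝[>] 0) (𝓝 0) := by
    have : Continuous fun x : ℝ => √x * exp x * Gamma (1 / 2) := by fun_prop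
    simpa using (this.tendsto 0).mono_left nhdsWithin_le_nhds
  refine squeeze_zero' ?_ ?_ hbound
  · filter_upwards [self_mem_nhdsWithin] with x (hx : 0 < x)
    exact mul_nonneg (by positivity) (expInt_nonneg x)
  · filter_upwards [self_mem_nhdsWithin] with x (hx : 0 < x)
    have hsqrt : 0 < √x := sqrt_pos.mpr hx
    calc x * exp x * expInt x ≤ x * exp x * (Gamma (1 / 2) / √x) := by
          gcongr
          exact expInt_le_Gamma_one_half_div_sqrt hx
      _ = √x * exp x * Gamma (1 / 2) := by
          field_simp
          rw [sq_sqrt hx.le]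

lemma tendsto_div_mul_atTop_nhdsGT_zero {c a : ℝ} (hc : 0 < c) (ha : 0 < a) :
    Tendsto (fun q : ℝ => c / (q * a)) atTop (𝓝[>] 0) :=
  tendsto_nhdsWithin_iff.mpr
    ⟨tendsto_const_nhds.div_atTop (tendsto_id.atTop_mul_const ha),
      (eventually_gt_atTop 0).mono fun _ hq => div_pos hc (mul_pos hq ha)⟩

lemma tendsto_sum_one_sub_mul_exp_mul_expInt {N : ℕ} {σ2 κt : ℝ} {r : Fin N → ℝ}
    (hσ : 0 < σ2) (hκt : 0 < κt) (hr : ∀ i, 0 < r i) :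
    Tendsto (fun q : ℝ => ∑ i, (1 / κt) * (1 - (σ2 / (q * κt * r i)) *
        exp (σ2 / (q * κt * r i)) * expInt (σ2 / (q * κt * r i)))) atTop (𝓝 (N / κt)) := by
  have hterm (i : Fin N) : Tendsto (fun q : ℝ => (1 / κt) * (1 - (σ2 / (q * κt * r i)) *
      exp (σ2 / (q * κt * r i)) * expInt (σ2 / (q * κt * r i)))) atTop (𝓝 (1 / κt)) := by
    have hx := tendsto_div_mul_atTop_nhdsGT_zero hσ (mul_pos hκt (hr i))
    simp_rw [← mul_assoc] at hx
    simpa using ((tendsto_mul_exp_mul_expInt_nhdsGT_zero.comp hx).const_sub 1).const_mul (1 / κt)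
  simpa [div_eq_mul_inv] using tendsto_finsetSum Finset.univ fun i _ => hterm i

/-- High-power capacity ceiling: with
`G(q) = ∑ᵢ (1/κ_t)(1 − (σ²/(q κ_t rᵢᵢ)) e^{σ²/(q κ_t rᵢᵢ)} E₁(σ²/(q κ_t rᵢᵢ)))`,
the quantity `log₂(1 + G(q)/(1 + κ_r G(q)))` converges, as the power `q → ∞`, to
`log₂(1 + N/(κ_t + κ_r N))`. -/
theorem stmt11 (N : ℕ) (σ2 κt κr : ℝ) (r : Fin N → ℝ)
    (hσ : 0 < σ2) (hκt : 0 < κt) (hκr : 0 < κr) (hr : ∀ i, 0 < r i) :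
    Filter.Tendsto
      (fun q : ℝ =>
        Real.logb 2 (1 +
          (∑ i, (1 / κt) * (1 - (σ2 / (q * κt * r i)) * Real.exp (σ2 / (q * κt * r i))
              * expInt (σ2 / (q * κt * r i)))) /
          (1 + κr * ∑ i, (1 / κt) * (1 - (σ2 / (q * κt * r i)) * Real.exp (σ2 / (q * κt * r i))
              * expInt (σ2 / (q * κt * r i))))))
      Filter.atTop
      (nhds (Real.logb 2 (1 + (N : ℝ) / (κt + κr * N)))) := by
  have hG := tendsto_sum_one_sub_mul_exp_mul_expInt hσ hκt hr
  have hden : 1 + κr * (N / κt) ≠ 0 := by positivity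
  have hlimit : 1 + (N / κt) / (1 + κr * (N / κt)) = 1 + (N : ℝ) / (κt + κr * N) := by
    field_simp
  have harg := (hG.div ((hG.const_mul κr).const_add 1) hden).const_add 1
  rw [hlimit] at harg
  exact (continuousAt_logb (by positivity)).tendsto.comp harg
end

section
/- The map x ↦ x e^x E₁(x) on (0,∞), where E₁(x)=∫₁^∞ e^{−tx}/t dt, satisfies 0 < x e^x E₁(x) < 1 for all x > 0, tends to 0 as x → 0⁺, and tends to 1 as x → ∞. -/
open MeasureTheory

/-!
For `t > 1`, comparing `1/t` with `1` and with `e^{1-t}` (as `t ≤ e^{t-1}`) gives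
`e^{-x}/(x+1) ≤ E₁(x) < e^{-x}/x`, i.e. `x/(x+1) ≤ x e^x E₁(x) < 1`: this yields positivity,
the bound `1` and the limit at `∞`. Near `0`, `e^{-tx} ≤ (tx)^{-1/2}` gives
`x E₁(x) ≤ 2√x`, and `x e^x E₁(x) → 0` by squeezing.
-/

open Real Set Filter Topology

theorem Real.sqrt_le_exp (u : ℝ) : √u ≤ exp u := by
  rcases le_or_gt u 0 with hu | hu
  · rw [sqrt_eq_zero'.mpr hu]
    exact (exp_pos u).le
  · calc √u ≤ u + 1 := sqrt_le_iff.mpr ⟨by linarith, by nlinarith⟩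
      _ ≤ exp u := add_one_le_exp u

theorem integrableOn_Ioi_exp_neg_mul_right (a : ℝ) {c : ℝ} (hc : 0 < c) :
    IntegrableOn (fun t => exp (-(t * c))) (Ioi a) := by
  simpa [mul_comm] using exp_neg_integrableOn_Ioi a hc

theorem integral_Ioi_exp_neg_mul_right (a : ℝ) {c : ℝ} (hc : 0 < c) :
    ∫ t in Ioi a, exp (-(t * c)) = exp (-(a * c)) / c := by
  have := integral_exp_mul_Ioi (neg_neg_of_pos hc) a
  simp only [neg_mul, neg_div_neg_eq] at this
  simpa [mul_comm] using this

theorem setIntegral_lt_setIntegral_of_lt_on {X : Type*} [MeasurableSpace X] {μ : Measure X}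
    {s : Set X} {f g : X → ℝ} (hs : MeasurableSet s) (hμs : μ s ≠ 0)
    (hf : IntegrableOn f s μ) (hg : IntegrableOn g s μ) (hfg : ∀ x ∈ s, f x < g x) :
    ∫ x in s, f x ∂μ < ∫ x in s, g x ∂μ := by
  have hpos : ∀ x ∈ s, 0 < (g - f) x := fun x hx => sub_pos.mpr (hfg x hx)
  have : 0 < ∫ x in s, (g - f) x ∂μ := by
    have hsupp : Function.support (g - f) ∩ s = s :=
      inter_eq_right.mpr fun x hx => (hpos x hx).ne'
    rw [setIntegral_pos_iff_support_of_nonneg_ae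
      (ae_restrict_of_forall_mem hs fun x hx => (hpos x hx).le) (hg.sub hf), hsupp]
    exact pos_iff_ne_zero.mpr hμs
  rwa [Pi.sub_def, integral_sub hg hf, sub_pos] at this

theorem integrableOn_expInt_integrand {x : ℝ} (hx : 0 < x) :
    IntegrableOn (fun t => exp (-(t * x)) / t) (Ioi 1) := by
  refine (integrableOn_Ioi_exp_neg_mul_right 1 hx).mono'
    (by fun_prop : Measurable fun t => exp (-(t * x)) / t).aestronglyMeasurable ?_
  filter_upwards [ae_restrict_mem measurableSet_Ioi] with t (ht : 1 < t)
  rw [norm_of_nonneg (by positivity)]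
  exact div_le_self (exp_pos _).le ht.le

theorem expInt_lt_exp_neg_div {x : ℝ} (hx : 0 < x) : expInt x < exp (-x) / x := by
  have := setIntegral_lt_setIntegral_of_lt_on measurableSet_Ioi (by simp)
    (integrableOn_expInt_integrand hx) (integrableOn_Ioi_exp_neg_mul_right 1 hx)
    fun t (ht : 1 < t) => div_lt_self (exp_pos _) ht
  simpa [expInt, integral_Ioi_exp_neg_mul_right 1 hx] using this

theorem exp_neg_div_add_one_le_expInt {x : ℝ} (hx : 0 < x) : exp (-x) / (x + 1) ≤ expInt x := by
  have hx1 : 0 < x + 1 := by linarith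
  have hle : ∀ t ∈ Ioi (1 : ℝ), exp 1 * exp (-(t * (x + 1))) ≤ exp (-(t * x)) / t := by
    intro t (ht : 1 < t)
    have hexp : exp 1 * exp (-(t * (x + 1))) = exp (-(t * x)) / exp (t - 1) := by
      rw [← exp_add, ← exp_sub]; ring_nf
    rw [hexp]
    exact div_le_div_of_nonneg_left (exp_pos _).le (by linarith)
      (by linarith [add_one_le_exp (t - 1)])
  have := setIntegral_mono_on ((integrableOn_Ioi_exp_neg_mul_right 1 hx1).const_mul (exp 1))
    (integrableOn_expInt_integrand hx) measurableSet_Ioi hle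
  rw [integral_const_mul, integral_Ioi_exp_neg_mul_right 1 hx1, ← mul_div_assoc,
    ← exp_add] at this
  simpa [expInt] using this

theorem exp_neg_mul_div_le_inv_sqrt_mul_rpow {t x : ℝ} (ht : 0 < t) (hx : 0 < x) :
    exp (-(t * x)) / t ≤ (√x)⁻¹ * t ^ (-(3 / 2) : ℝ) := by
  have hpow : t ^ (-(3 / 2) : ℝ) = (t * √t)⁻¹ := by
    rw [rpow_neg ht.le, show (3 / 2 : ℝ) = 1 + 1 / 2 by norm_num, rpow_add ht, rpow_one,
      ← sqrt_eq_rpow]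
  calc exp (-(t * x)) / t = (t * exp (t * x))⁻¹ := by rw [exp_neg, div_eq_mul_inv, mul_inv]; ring
    _ ≤ (t * √(t * x))⁻¹ := by
      gcongr
      exact sqrt_le_exp _
    _ = (√x)⁻¹ * t ^ (-(3 / 2) : ℝ) := by
      rw [hpow, sqrt_mul ht.le, ← mul_inv, mul_comm (√x), mul_assoc]

theorem mul_expInt_le_two_mul_sqrt {x : ℝ} (hx : 0 < x) : x * expInt x ≤ 2 * √x := by
  have hbound := setIntegral_mono_on (integrableOn_expInt_integrand hx)
    ((integrableOn_Ioi_rpow_of_lt (by norm_num) one_pos).const_mul (√x)⁻¹) measurableSet_Ioi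
    fun t (ht : 1 < t) => exp_neg_mul_div_le_inv_sqrt_mul_rpow (one_pos.trans ht) hx
  rw [integral_const_mul, integral_Ioi_rpow_of_lt (by norm_num) one_pos, one_rpow] at hbound
  norm_num at hbound
  calc x * expInt x ≤ x * ((√x)⁻¹ * 2) := by
        gcongr
        simpa [expInt] using hbound
    _ = 2 * √x := by
        field_simp [(sqrt_pos.mpr hx).ne']
        linear_combination -mul_self_sqrt hx.le

theorem mul_exp_mul_expInt_lt_one {x : ℝ} (hx : 0 < x) : x * exp x * expInt x < 1 :=
  calc x * exp x * expInt x < x * exp x * (exp (-x) / x) := by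
        gcongr
        exact expInt_lt_exp_neg_div hx
    _ = 1 := by
        rw [exp_neg]
        field_simp

theorem div_add_one_le_mul_exp_mul_expInt {x : ℝ} (hx : 0 < x) :
    x / (x + 1) ≤ x * exp x * expInt x :=
  calc x / (x + 1) = x * exp x * (exp (-x) / (x + 1)) := by
        rw [exp_neg]
        field_simp
    _ ≤ x * exp x * expInt x := by
        gcongr
        exact exp_neg_div_add_one_le_expInt hx

theorem tendsto_div_add_one_atTop : Tendsto (fun x : ℝ => x / (x + 1)) atTop (𝓝 1) := by
  have h : Tendsto (fun x : ℝ => 1 - (x + 1)⁻¹) atTop (𝓝 (1 - 0)) :=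
    (tendsto_inv_atTop_zero.comp (tendsto_atTop_add_const_right atTop 1 tendsto_id)).const_sub 1
  rw [sub_zero] at h
  refine h.congr' ?_
  filter_upwards [eventually_gt_atTop 0] with x hx
  field_simp
  ring

/-- The map `x ↦ x e^x E₁(x)` on `(0,∞)` takes values in `(0,1)`, tends to `0`
as `x → 0⁺`, and tends to `1` as `x → ∞`. -/
theorem stmt13 :
    (∀ x : ℝ, 0 < x → 0 < x * Real.exp x * expInt x ∧ x * Real.exp x * expInt x < 1)
      ∧ Filter.Tendsto (fun x : ℝ => x * Real.exp x * expInt x)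
          (nhdsWithin 0 (Set.Ioi 0)) (nhds 0)
      ∧ Filter.Tendsto (fun x : ℝ => x * Real.exp x * expInt x)
          Filter.atTop (nhds 1) := by
  have hpos : ∀ x : ℝ, 0 < x → 0 < x * exp x * expInt x := fun x hx =>
    (div_pos hx (by linarith)).trans_le (div_add_one_le_mul_exp_mul_expInt hx)
  refine ⟨fun x hx => ⟨hpos x hx, mul_exp_mul_expInt_lt_one hx⟩, ?_, ?_⟩
  · have hupper : Tendsto (fun x : ℝ => exp x * (2 * √x)) (𝓝[>] 0) (𝓝 0) :=
      ((by fun_prop : Continuous fun x : ℝ => exp x * (2 * √x)).tendsto' 0 0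
        (by simp)).mono_left nhdsWithin_le_nhds
    refine tendsto_of_tendsto_of_tendsto_of_le_of_le' tendsto_const_nhds hupper ?_ ?_
    · filter_upwards [self_mem_nhdsWithin] with x hx using (hpos x hx).le
    · filter_upwards [self_mem_nhdsWithin] with x (hx : 0 < x)
      rw [mul_right_comm, mul_comm]
      exact mul_le_mul_of_nonneg_left (mul_expInt_le_two_mul_sqrt hx) (exp_pos x).le
  · refine tendsto_of_tendsto_of_tendsto_of_le_of_le' tendsto_div_add_one_atTop
      tendsto_const_nhds ?_ ?_
    · filter_upwards [eventually_gt_atTop 0] with x hx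
        using div_add_one_le_mul_exp_mul_expInt hx
    · filter_upwards [eventually_gt_atTop 0] with x hx using (mul_exp_mul_expInt_lt_one hx).le
end
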